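/- A connected graph G either has a perfect matching or is factor-critical if and only if odd(G - S) ≤ |S| for all nonempty subsets S of V(G). -/

import Mathlib

/-!
For even order this is Tutte's theorem (`SimpleGraph.tutte`): the only set the hypothesis omits
is `S = ∅`, and a connected graph of even order has no odd component.

For odd order, a matching covering exactly `V \ {x}` is a perfect matching of `G - x`, so by
Tutte's theorem it exists iff `odd((G - x) - u) ≤ |u|` for all `u ⊆ V \ {x}`. Since
`(G - x) - u = G - (u ∪ {x})`, the hypothesis gives `odd((G - x) - u) ≤ |u| + 1`, and the parity
identity `odd(G - S) ≡ |V| - |S| (mod 2)` rules out equality.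
-/

open SimpleGraph

/-- Number of odd components of the graph obtained from `G` by deleting `S`. -/
noncomputable def oddComp {V : Type*} (G : SimpleGraph V) (S : Set V) : ℕ :=
  Nat.card {C : (G.induce Sᶜ).ConnectedComponent // Odd (Nat.card C.supp)}

namespace SimpleGraph

variable {V W : Type*} {G : SimpleGraph V} {G' : SimpleGraph W}

lemma Iso.ncard_oddComponents (φ : G ≃g G') :
    G.oddComponents.ncard = G'.oddComponents.ncard := by
  have hsupp (C : G.ConnectedComponent) :
      (φ.connectedComponentEquiv C).supp.ncard = C.supp.ncard :=
    (Nat.card_congr (ConnectedComponent.isoEquivSupp φ C)).symm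
  rw [← Nat.card_coe_set_eq, ← Nat.card_coe_set_eq]
  exact Nat.card_congr <| φ.connectedComponentEquiv.subtypeEquiv fun C => by
    rw [Set.mem_ofPred_eq, Set.mem_ofPred_eq, hsupp]

lemma oddComp_eq_ncard_oddComponents (G : SimpleGraph V) (S : Set V) :
    oddComp G S = (G.induce Sᶜ).oddComponents.ncard := by
  simp only [oddComp, ← Nat.card_coe_set_eq]
  rfl

def deleteVertsIsoInduceCompl (G : SimpleGraph V) (S : Set V) :
    ((⊤ : G.Subgraph).deleteVerts S).coe ≃g G.induce Sᶜ where
  toEquiv := Equiv.subtypeEquivRight (by simp)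
  map_rel_iff' := by simp +contextual

def induceInduceIso (G : SimpleGraph V) (s : Set V) (u : Set s) :
    (G.induce s).induce uᶜ ≃g G.induce (s \ Subtype.val '' u) where
  toFun v := ⟨v.1.1, v.1.2, by rintro ⟨w, hw, hwv⟩; exact v.2 (Subtype.ext hwv ▸ hw)⟩
  invFun v := ⟨⟨v.1, v.2.1⟩, fun hu => v.2.2 ⟨_, hu, rfl⟩⟩
  left_inv _ := rfl
  right_inv _ := rfl
  map_rel_iff' := by simp

lemma oddComp_induce (G : SimpleGraph V) (s : Set V) (u : Set s) :
    oddComp (G.induce s) u = oddComp G (sᶜ ∪ Subtype.val '' u) := by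
  rw [oddComp_eq_ncard_oddComponents, (induceInduceIso G s u).ncard_oddComponents,
    oddComp_eq_ncard_oddComponents, Set.compl_union, compl_compl, Set.sdiff_eq]

lemma oddComp_empty (G : SimpleGraph V) : oddComp G ∅ = G.oddComponents.ncard := by
  rw [oddComp_eq_ncard_oddComponents, Set.compl_empty, G.induceUnivIso.ncard_oddComponents]

lemma even_oddComp_add_ncard_iff [Finite V] (G : SimpleGraph V) (S : Set V) :
    Even (oddComp G S + S.ncard) ↔ Even (Nat.card V) := by
  rw [← Set.ncard_compl_add_ncard S, oddComp_eq_ncard_oddComponents, Nat.even_add, Nat.even_add,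
    ← Nat.not_odd_iff_even, odd_ncard_oddComponents, Nat.not_odd_iff_even, Nat.card_coe_set_eq]

lemma Preconnected.ncard_oddComponents_eq_zero [Finite V] (hG : G.Preconnected)
    (heven : Even (Nat.card V)) : G.oddComponents.ncard = 0 := by
  have : Subsingleton G.ConnectedComponent := hG.subsingleton_connectedComponent
  have hle : G.oddComponents.ncard ≤ 1 := Set.ncard_le_one_of_subsingleton _
  have hnotodd : ¬Odd G.oddComponents.ncard := by
    rwa [odd_ncard_oddComponents, Nat.not_odd_iff_even]
  grind

lemma isTutteViolator_iff_ncard_lt_oddComp (G : SimpleGraph V) (S : Set V) :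
    G.IsTutteViolator S ↔ S.ncard < oddComp G S := by
  rw [IsTutteViolator, oddComp_eq_ncard_oddComponents,
    (deleteVertsIsoInduceCompl G S).ncard_oddComponents]

theorem exists_isPerfectMatching_iff_forall_oddComp_le [Finite V] :
    (∃ M : G.Subgraph, M.IsPerfectMatching) ↔ ∀ S, oddComp G S ≤ S.ncard := by
  simp [tutte, isTutteViolator_iff_ncard_lt_oddComp]

theorem exists_isMatching_verts_eq_iff (s : Set V) :
    (∃ M : G.Subgraph, M.IsMatching ∧ M.verts = s) ↔
      ∃ M : (G.induce s).Subgraph, M.IsPerfectMatching := by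
  rw [induce_eq_coe_induce_top]
  constructor
  · rintro ⟨M, hM, rfl⟩
    refine ⟨Subgraph.restrict M, ?_, ?_⟩
    · rintro v -
      obtain ⟨w, hvw, huniq⟩ := hM v.2
      exact ⟨⟨w, hvw.snd_mem⟩, ⟨⟨v.2, hvw.snd_mem, M.adj_sub hvw⟩, hvw⟩,
        fun w' hw' => Subtype.ext (huniq _ hw'.2)⟩
    · exact fun v => v.2
  · rintro ⟨M, hM, hspan⟩
    refine ⟨Subgraph.coeSubgraph M, hM.coeSubgraph, ?_⟩
    exact Set.ext fun v =>
      ⟨fun ⟨w, _, hw⟩ => hw ▸ w.2, fun hv => ⟨⟨v, hv⟩, hspan _, rfl⟩⟩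

theorem exists_isMatching_verts_eq_compl_singleton_iff [Finite V] (x : V) :
    (∃ M : G.Subgraph, M.IsMatching ∧ M.verts = {x}ᶜ) ↔
      ∀ u : Set ({x}ᶜ : Set V), oddComp G (insert x (Subtype.val '' u)) ≤ u.ncard := by
  simp only [exists_isMatching_verts_eq_iff, exists_isPerfectMatching_iff_forall_oddComp_le,
    oddComp_induce, compl_compl, Set.singleton_union]

theorem exists_isPerfectMatching_of_forall_nonempty_oddComp_le [Finite V] (hG : G.Preconnected)
    (heven : Even (Nat.card V)) (h : ∀ S : Set V, S.Nonempty → oddComp G S ≤ S.ncard) :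
    ∃ M : G.Subgraph, M.IsPerfectMatching := by
  refine exists_isPerfectMatching_iff_forall_oddComp_le.mpr fun S => ?_
  rcases S.eq_empty_or_nonempty with rfl | hS
  · simp [oddComp_empty, hG.ncard_oddComponents_eq_zero heven]
  · exact h S hS

theorem oddComp_le_ncard_of_isMatching_verts_eq_compl_singleton [Finite V] {x : V}
    (hx : ∃ M : G.Subgraph, M.IsMatching ∧ M.verts = {x}ᶜ) {S : Set V} (hxS : x ∈ S) :
    oddComp G S ≤ S.ncard := by
  set u : Set ({x}ᶜ : Set V) := Subtype.val ⁻¹' S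
  have hS : insert x (Subtype.val '' u) = S := by
    rw [Subtype.image_preimage_coe, ← Set.singleton_union, Set.union_inter_distrib_left,
      Set.union_compl_self, Set.univ_inter, Set.singleton_union, Set.insert_eq_of_mem hxS]
  calc oddComp G S = oddComp G (insert x (Subtype.val '' u)) := by rw [hS]
    _ ≤ u.ncard := (exists_isMatching_verts_eq_compl_singleton_iff x).mp hx u
    _ = (Subtype.val '' u).ncard := (Set.ncard_image_of_injective _ Subtype.val_injective).symm
    _ ≤ S.ncard := Set.ncard_le_ncard (Set.image_preimage_subset _ _)

theorem exists_isMatching_verts_eq_compl_singleton_of_odd [Finite V] (hodd : Odd (Nat.card V))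
    (h : ∀ S : Set V, S.Nonempty → oddComp G S ≤ S.ncard) (x : V) :
    ∃ M : G.Subgraph, M.IsMatching ∧ M.verts = {x}ᶜ := by
  refine (exists_isMatching_verts_eq_compl_singleton_iff x).mpr fun u => ?_
  set S := insert x (Subtype.val '' u)
  have hcard : S.ncard = u.ncard + 1 := by
    rw [Set.ncard_insert_of_notMem (by simp), Set.ncard_image_of_injective _ Subtype.val_injective]
  have hle : oddComp G S ≤ u.ncard + 1 := hcard ▸ h S (Set.insert_nonempty _ _)
  have hpar : ¬Even (oddComp G S + (u.ncard + 1)) := by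
    rwa [← hcard, even_oddComp_add_ncard_iff, Nat.not_even_iff_odd]
  rw [Nat.even_iff] at hpar
  omega

end SimpleGraph

theorem stmt_3 {V : Type*} [Fintype V] (G : SimpleGraph V) (hconn : G.Connected) :
    ((∃ M : G.Subgraph, M.IsPerfectMatching) ∨
      (∀ x : V, ∃ M : G.Subgraph, M.IsMatching ∧ M.verts = {x}ᶜ)) ↔
    (∀ S : Set V, S.Nonempty → oddComp G S ≤ S.ncard) := by
  constructor
  · rintro (hpm | hfc) S hS
    · exact exists_isPerfectMatching_iff_forall_oddComp_le.mp hpm S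
    · obtain ⟨x, hx⟩ := hS
      exact oddComp_le_ncard_of_isMatching_verts_eq_compl_singleton (hfc x) hx
  · intro h
    rcases Nat.even_or_odd (Nat.card V) with heven | hodd
    · exact .inl <|
        exists_isPerfectMatching_of_forall_nonempty_oddComp_le hconn.preconnected heven h
    · exact .inr (exists_isMatching_verts_eq_compl_singleton_of_odd hodd h)
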